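/- Gordan–Dickson / Hilbert basis existence: the set S of nonnegative integer solutions a ∈ ℕ^m of a homogeneous linear Diophantine system M a = 0 (M an integer matrix) is a submonoid of ℕ^m under addition, and it admits a finite generating set H such that every element of S is a finite sum (equivalently an ℕ-linear combination) of elements of H. -/

import Mathlib

/-! The solutions form the kernel of the additive map `a ↦ M a` on `ℕ^m`, and such a kernel
is closed under `a - b` whenever `b ≤ a`. So a nonzero solution is the sum of a minimal
nonzero solution below it and a strictly smaller solution, and well-founded induction shows
that the minimal nonzero solutions generate. They form an antichain, hence a finite set by
Dickson's lemma. -/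

theorem AddMonoidHom.tsub_mem_mker {α G : Type*} [AddCommMonoid α] [PartialOrder α]
    [CanonicallyOrderedAdd α] [Sub α] [OrderedSub α] [AddMonoid G] (f : α →+ G) {a b : α}
    (ha : a ∈ AddMonoidHom.mker f) (hb : b ∈ AddMonoidHom.mker f) (hba : b ≤ a) :
    a - b ∈ AddMonoidHom.mker f := by
  rw [AddMonoidHom.mem_mker] at *
  calc f (a - b) = f (a - b) + f b := by rw [hb, add_zero]
    _ = 0 := by rw [← map_add, tsub_add_cancel_of_le hba, ha]

theorem tsub_lt_self_of_ne_zero {α : Type*} [AddCommMonoid α] [PartialOrder α]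
    [CanonicallyOrderedAdd α] [Sub α] [OrderedSub α] [IsLeftCancelAdd α] {a b : α}
    (hb : b ≠ 0) (hba : b ≤ a) : a - b < a :=
  tsub_le_self.lt_of_ne fun h =>
    hb <| add_eq_left.mp <| (tsub_add_cancel_of_le hba).trans h.symm

section

variable {ι : Type*} [Finite ι]

theorem mem_closure_setOf_minimal_of_tsub_mem {S : Set (ι → ℕ)}
    (hS : ∀ a ∈ S, ∀ b ∈ S, b ≤ a → a - b ∈ S) {s : ι → ℕ} (hs : s ∈ S) :
    s ∈ AddSubmonoid.closure {a | Minimal (· ∈ S \ {0}) a} := by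
  induction s using WellFoundedLT.induction with
  | ind s ih =>
  rcases eq_or_ne s 0 with rfl | hs0
  · exact zero_mem _
  obtain ⟨h, hhs, hmin⟩ := exists_minimal_le_of_wellFoundedLT (· ∈ S \ {0}) s ⟨hs, hs0⟩
  obtain ⟨hhS, hh0⟩ := hmin.prop
  rw [← tsub_add_cancel_of_le hhs]
  exact add_mem (ih _ (tsub_lt_self_of_ne_zero hh0 hhs) (hS s hs h hhS hhs))
    (AddSubmonoid.subset_closure hmin)

theorem finite_setOf_minimal (P : (ι → ℕ) → Prop) : {a | Minimal P a}.Finite :=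
  WellQuasiOrderedLE.finite_of_isAntichain (setOfPred_minimal_antichain P)

theorem AddSubmonoid.fg_of_tsub_mem (P : AddSubmonoid (ι → ℕ))
    (hP : ∀ a ∈ P, ∀ b ∈ P, b ≤ a → a - b ∈ P) : P.FG := by
  obtain ⟨H, hH⟩ := (finite_setOf_minimal (· ∈ (P : Set (ι → ℕ)) \ {0})).exists_finset_coe
  refine ⟨H, le_antisymm ?_ fun s hs => ?_⟩
  · exact AddSubmonoid.closure_le.mpr (hH ▸ fun a ha => ha.prop.1)
  · exact hH ▸ mem_closure_setOf_minimal_of_tsub_mem hP hs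

theorem AddMonoidHom.fg_mker {G : Type*} [AddMonoid G] (f : (ι → ℕ) →+ G) : (mker f).FG :=
  AddSubmonoid.fg_of_tsub_mem _ fun _ ha _ hb hba => f.tsub_mem_mker ha hb hba

end

namespace Matrix

variable {κ ι R : Type*} [Fintype ι] [CommSemiring R]

def natMulVecHom (M : Matrix κ ι R) : (ι → ℕ) →+ (κ → R) :=
  M.mulVecLin.toAddMonoidHom.comp (AddMonoidHom.compLeft (Nat.castAddMonoidHom R) ι)

theorem mem_mker_natMulVecHom {M : Matrix κ ι R} {a : ι → ℕ} :
    a ∈ AddMonoidHom.mker M.natMulVecHom ↔ ∀ i, ∑ j, M i j * (a j : R) = 0 := by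
  simp [natMulVecHom, funext_iff, mulVec, dotProduct]

end Matrix

/-- Gordan–Dickson / Hilbert basis existence: the nonnegative
integer solutions of a homogeneous linear Diophantine system form an additive
submonoid of `ℕ^m` possessing a finite generating set. -/
theorem stmt_4 (k m : ℕ) (M : Matrix (Fin k) (Fin m) ℤ)
    (S : Set (Fin m → ℕ)) (hS : S = {a | ∀ i, ∑ j, M i j * (a j : ℤ) = 0}) :
    (0 ∈ S) ∧ (∀ a ∈ S, ∀ b ∈ S, a + b ∈ S) ∧
      ∃ H : Finset (Fin m → ℕ), ↑H ⊆ S ∧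
        ∀ s ∈ S, ∃ c : (Fin m → ℕ) → ℕ, s = ∑ h ∈ H, c h • h := by
  obtain rfl : S = AddMonoidHom.mker M.natMulVecHom := by
    ext a
    rw [hS, SetLike.mem_coe, Matrix.mem_mker_natMulVecHom, Set.mem_ofPred_eq]
  obtain ⟨H, hH⟩ := M.natMulVecHom.fg_mker
  refine ⟨zero_mem _, fun a ha b hb => add_mem ha hb, H, hH ▸ AddSubmonoid.subset_closure,
    fun s hs => ?_⟩
  obtain ⟨c, -, hc⟩ := AddSubmonoid.mem_closure_finset.mp (hH ▸ hs)
  exact ⟨c, hc.symm⟩
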